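/- arXiv:1504.04079 — 6 statements merged into one kernel-verified Lean document; each statement's English description precedes it below -/
import Mathlib

section
/- For every real number M > 0 and every real number s < 1, there exists a unique ρ > 0 with f_M(ρ) = s; consequently f_M restricts to a bijection from (0, ∞) onto (-∞, 1), so the Schwarzschild radius function is well defined on the Kruskal region {u·v < 1}. -/
/-- The Kruskal relation function `f_M(ρ) = (1 - ρ/(2M))·exp(ρ/(2M))`. -/
noncomputable def fM (M ρ : ℝ) : ℝ := (1 - ρ / (2 * M)) * Real.exp (ρ / (2 * M))

/-!
`f_M` is the profile `g(x) = (1 - x) eˣ` evaluated at `x = ρ / (2M)`, and the rescaling is a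
bijection of `(0, ∞)`. Since `g'(x) = -x eˣ < 0` for `x > 0`, `g` is strictly decreasing on
`[0, ∞)`; it starts at `g(0) = 1` and tends to `-∞`, so by the intermediate value theorem it maps
`(0, ∞)` bijectively onto `(-∞, 1)`.
-/

open Set Filter Real

theorem Set.BijOn.existsUnique_mem {α β : Type*} {f : α → β} {s : Set α} {t : Set β}
    (h : BijOn f s t) {y : β} (hy : y ∈ t) : ∃! x, x ∈ s ∧ f x = y := by
  obtain ⟨x, hx, rfl⟩ := h.surjOn hy
  exact ⟨x, ⟨hx, rfl⟩, fun x' ⟨hx', hfx'⟩ => h.injOn hx' hx hfx'⟩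

lemma bijOn_div_const_Ioi_zero {𝕜 : Type*} [Field 𝕜] [LinearOrder 𝕜] [IsStrictOrderedRing 𝕜]
    {c : 𝕜} (hc : 0 < c) : BijOn (· / c) (Ioi 0) (Ioi 0) :=
  ⟨fun _ hx => div_pos hx hc, fun _ _ _ _ hxy => (div_left_inj' hc.ne').mp hxy,
    fun y hy => ⟨y * c, mul_pos hy hc, mul_div_cancel_right₀ y hc.ne'⟩⟩

lemma hasDerivAt_one_sub_mul_exp (x : ℝ) :
    HasDerivAt (fun x => (1 - x) * exp x) (-x * exp x) x := by
  refine (((hasDerivAt_id' x).const_sub 1).mul (hasDerivAt_exp x)).congr_deriv ?_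
  ring

lemma strictAntiOn_one_sub_mul_exp : StrictAntiOn (fun x => (1 - x) * exp x) (Ici 0) := by
  refine strictAntiOn_of_deriv_neg (convex_Ici 0)
    (fun x _ => (hasDerivAt_one_sub_mul_exp x).continuousAt.continuousWithinAt) fun x hx => ?_
  rw [interior_Ici] at hx
  rw [(hasDerivAt_one_sub_mul_exp x).deriv, neg_mul, neg_lt_zero]
  exact mul_pos hx (exp_pos x)

lemma tendsto_one_sub_mul_exp_atTop : Tendsto (fun x => (1 - x) * exp x) atTop atBot :=
  (tendsto_atBot_add_const_left _ 1 tendsto_neg_atTop_atBot).atBot_mul_atTop₀ tendsto_exp_atTop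

lemma bijOn_one_sub_mul_exp : BijOn (fun x => (1 - x) * exp x) (Ioi 0) (Iio 1) := by
  have himage : (fun x => (1 - x) * exp x) '' Ioi 0 = Iio 1 := by
    have hcont : Continuous fun x : ℝ => (1 - x) * exp x := by fun_prop
    simpa using hcont.continuousOn.image_Ioi_of_strictAntiOn strictAntiOn_one_sub_mul_exp
      tendsto_one_sub_mul_exp_atTop
  exact himage ▸ (strictAntiOn_one_sub_mul_exp.injOn.mono Ioi_subset_Ici_self).bijOn_image

/-- For every `M > 0` and every `s < 1` there is a unique `ρ > 0` with `f_M(ρ) = s`;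
consequently `f_M` restricts to a bijection from `(0,∞)` onto `(-∞,1)`, so the
Schwarzschild radius function is well defined on the Kruskal region `{u·v < 1}`. -/
theorem fM_bijective_onto_Iio_one (M : ℝ) (hM : 0 < M) :
    (∀ s : ℝ, s < 1 → ∃! ρ : ℝ, 0 < ρ ∧ fM M ρ = s) ∧
      Set.BijOn (fM M) (Set.Ioi (0 : ℝ)) (Set.Iio (1 : ℝ)) := by
  have hbij : BijOn (fM M) (Ioi 0) (Iio 1) :=
    bijOn_one_sub_mul_exp.comp (bijOn_div_const_Ioi_zero (by positivity : (0 : ℝ) < 2 * M))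
  exact ⟨fun s hs => hbij.existsUnique_mem hs, hbij⟩
end

section
/- For every real number M > 0, the Schwarzschild radius function r_M is infinitely differentiable (C^∞) on the open interval (-∞, 1). -/
lemma fM_hasStrictDerivAt (M : ℝ) (hM : 0 < M) (ρ : ℝ) :
    HasStrictDerivAt (fM M) (-ρ / (4 * M ^ 2) * Real.exp (ρ / (2 * M))) ρ := by
  have h1 : HasStrictDerivAt (fun x : ℝ => x / (2 * M)) (1 / (2 * M)) ρ := by
    simpa using (hasStrictDerivAt_id ρ).div_const (2 * M)
  have h2 : HasStrictDerivAt (fun x : ℝ => Real.exp (x / (2 * M)))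
      (Real.exp (ρ / (2 * M)) * (1 / (2 * M))) ρ :=
    (Real.hasStrictDerivAt_exp _).comp ρ h1
  have h3 : HasStrictDerivAt (fun x : ℝ => 1 - x / (2 * M)) (-(1 / (2 * M))) ρ :=
    by simpa using h1.const_sub 1
  have h : HasStrictDerivAt (fM M) _ ρ :=
    h3.mul h2
  convert h using 1
  field_simp
  ring

lemma fM_contDiff (M : ℝ) : ContDiff ℝ (⊤ : ℕ∞) (fM M) := by
  unfold fM
  exact (contDiff_const.sub (contDiff_id.div_const _)).mul
    (Real.contDiff_exp.comp (contDiff_id.div_const _))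

lemma fM_deriv_neg (M : ℝ) (hM : 0 < M) {ρ : ℝ} (hρ : 0 < ρ) :
    -ρ / (4 * M ^ 2) * Real.exp (ρ / (2 * M)) < 0 := by
  apply mul_neg_of_neg_of_pos _ (Real.exp_pos _)
  apply div_neg_of_neg_of_pos (by linarith)
  positivity

lemma fM_strictAntiOn (M : ℝ) (hM : 0 < M) : StrictAntiOn (fM M) (Set.Ici 0) := by
  apply strictAntiOn_of_deriv_neg (convex_Ici 0) ((fM_contDiff M).continuous.continuousOn)
  intro x hx
  rw [interior_Ici] at hx
  rw [(fM_hasStrictDerivAt M hM x).hasDerivAt.deriv]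
  exact fM_deriv_neg M hM hx

/-- For every `M > 0`, the Schwarzschild radius function `r_M` — the unique function
with `r_M(s) > 0` and `f_M(r_M(s)) = s` for all `s < 1` — is `C^∞` on `(-∞, 1)`. -/
theorem rM_contDiffOn (M : ℝ) (hM : 0 < M) (rM : ℝ → ℝ)
    (hrM : ∀ s : ℝ, s < 1 → 0 < rM s ∧ fM M (rM s) = s) :
    ContDiffOn ℝ (⊤ : ℕ∞) rM (Set.Iio (1 : ℝ)) := by
  intro s hs
  apply ContDiffWithinAt.mono_of_mem_nhdsWithin _ (self_mem_nhdsWithin)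
  apply ContDiffAt.contDiffWithinAt
  have hs1 : s < 1 := hs
  obtain ⟨ha, hfa⟩ := hrM s hs1
  set a := rM s with ha_def
  set d : ℝ := -a / (4 * M ^ 2) * Real.exp (a / (2 * M)) with hd_def
  have hdneg : d < 0 := fM_deriv_neg M hM ha
  have hdne : d ≠ 0 := ne_of_lt hdneg
  have hstrict : HasStrictDerivAt (fM M) d a := fM_hasStrictDerivAt M hM a
  have hcd : ContDiffAt ℝ (⊤ : ℕ∞) (fM M) a := (fM_contDiff M).contDiffAt
  -- derivative as continuous linear equiv
  set e : ℝ ≃L[ℝ] ℝ := ContinuousLinearEquiv.unitsEquivAut ℝ (Units.mk0 d hdne) with he_def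
  have hef : HasFDerivAt (fM M) (e : ℝ →L[ℝ] ℝ) a := by
    have : HasFDerivAt (fM M) (ContinuousLinearMap.smulRight (1 : ℝ →L[ℝ] ℝ) d) a :=
      hstrict.hasDerivAt.hasFDerivAt
    have hcl : (e : ℝ →L[ℝ] ℝ) = ContinuousLinearMap.smulRight (1 : ℝ →L[ℝ] ℝ) d := by
      ext
      simp [he_def, ContinuousLinearEquiv.unitsEquivAut, mul_comm]
    rw [hcl]
    exact this
  set g := hcd.localInverse hef (by simp) with hg_def
  have hga : g (fM M a) = a := hcd.localInverse_apply_image hef (by simp)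
  have hgcd : ContDiffAt ℝ (⊤ : ℕ∞) g (fM M a) := hcd.to_localInverse hef (by simp)
  rw [hfa] at hgcd hga
  -- eventual right inverse
  have hev1 : ∀ᶠ y in nhds s, fM M (g y) = y := by
    have := (hcd.hasStrictFDerivAt' hef (by simp)).eventually_right_inverse
    rw [hfa] at this
    exact this
  have hev2 : ∀ᶠ y in nhds s, 0 < g y := by
    have hc : ContinuousAt g s := hgcd.continuousAt
    have : ∀ᶠ x in nhds (g s), 0 < x := by rw [hga]; exact eventually_gt_nhds ha
    exact hc.eventually this
  have hev3 : ∀ᶠ y in nhds s, y < 1 := Filter.Tendsto.eventually_lt_const hs1 Filter.tendsto_id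
  have heq : rM =ᶠ[nhds s] g := by
    filter_upwards [hev1, hev2, hev3] with y h1 h2 h3
    obtain ⟨hy1, hy2⟩ := hrM y h3
    exact (fM_strictAntiOn M hM).injOn (le_of_lt hy1) (le_of_lt h2) (by rw [hy2, h1])
  exact hgcd.congr_of_eventuallyEq heq
end

section
/- For every real number M > 0 and every (τ,x) with (1-τ)² - x² < 1, the radius function r(τ,x) = r_M((1-τ)² - x²) has partial derivatives ∂_τ r(τ,x) = (Ω²(τ,x)/(4M))·(1-τ) and ∂_x r(τ,x) = (Ω²(τ,x)/(4M))·x, where Ω²(τ,x) = (32M³/r(τ,x))·exp(-r(τ,x)/(2M)). -/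
/-!
On `(0, ∞)` the map `f_M` is a strictly decreasing bijection onto `(-∞, 1)` with derivative
`-(ρ/(4M²))·exp(ρ/(2M)) ≠ 0`, and `r_M` is its inverse. Monotonicity makes `r_M` continuous, so the
inverse function rule gives `r_M'(s) = -(4M²/r)·exp(-r/(2M)) = -Ω²/(8M)` with `r = r_M(s)`, and the
chain rule applied to `s = (1-τ)² - x²` yields both partial derivatives.
-/

open Real Set Filter Topology

/-- The radius function in the `(τ,x)` coordinates: `r(τ,x) = r_M((1-τ)² - x²)`. -/
noncomputable def rr (rM : ℝ → ℝ) (τ x : ℝ) : ℝ := rM ((1 - τ) ^ 2 - x ^ 2)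

/-- The conformal factor `Ω²(τ,x) = (32M³/r(τ,x))·exp(-r(τ,x)/(2M))`. -/
noncomputable def Om2 (M : ℝ) (rM : ℝ → ℝ) (τ x : ℝ) : ℝ :=
  32 * M ^ 3 / rr rM τ x * Real.exp (-(rr rM τ x) / (2 * M))

section fM

variable {M : ℝ}

theorem hasDerivAt_fM (M ρ : ℝ) :
    HasDerivAt (fM M) (-(ρ / (4 * M ^ 2)) * exp (ρ / (2 * M))) ρ := by
  have hu : HasDerivAt (fun ρ : ℝ => ρ / (2 * M)) (1 / (2 * M)) ρ :=
    (hasDerivAt_id ρ).div_const (2 * M)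
  refine ((hu.const_sub 1).mul (hu.exp)).congr_deriv ?_
  ring

theorem fM_zero (M : ℝ) : fM M 0 = 1 := by
  simp [fM]

theorem strictAntiOn_fM (hM : 0 < M) : StrictAntiOn (fM M) (Ici 0) := by
  refine strictAntiOn_of_deriv_neg (convex_Ici 0)
    (fun ρ _ => (hasDerivAt_fM M ρ).continuousAt.continuousWithinAt) fun ρ hρ => ?_
  rw [interior_Ici, mem_Ioi] at hρ
  rw [(hasDerivAt_fM M ρ).deriv, neg_mul, neg_lt_zero]
  positivity

theorem fM_lt_one (hM : 0 < M) {ρ : ℝ} (hρ : 0 < ρ) : fM M ρ < 1 :=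
  fM_zero M ▸ strictAntiOn_fM hM self_mem_Ici hρ.le hρ

end fM

section rM

variable {M : ℝ} {rM : ℝ → ℝ}

theorem rM_fM (hM : 0 < M) (hrM : ∀ s : ℝ, s < 1 → 0 < rM s ∧ fM M (rM s) = s) {ρ : ℝ}
    (hρ : 0 < ρ) : rM (fM M ρ) = ρ :=
  have hs := hrM _ (fM_lt_one hM hρ)
  (strictAntiOn_fM hM).injOn hs.1.le hρ.le hs.2

theorem strictAntiOn_rM (hM : 0 < M) (hrM : ∀ s : ℝ, s < 1 → 0 < rM s ∧ fM M (rM s) = s) :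
    StrictAntiOn rM (Iio 1) := fun a ha b hb hab => by
  obtain ⟨hra, hfa⟩ := hrM a ha
  obtain ⟨hrb, hfb⟩ := hrM b hb
  rwa [← (strictAntiOn_fM hM).lt_iff_gt hra.le hrb.le, hfa, hfb]

theorem continuousAt_rM (hM : 0 < M) (hrM : ∀ s : ℝ, s < 1 → 0 < rM s ∧ fM M (rM s) = s)
    {s : ℝ} (hs : s < 1) : ContinuousAt rM s := by
  have hmono : StrictMonoOn (fun s => -rM s) (Iio 1) := fun a ha b hb hab =>
    neg_lt_neg (strictAntiOn_rM hM hrM ha hb hab)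
  -- every negative value `-ρ` is attained, at `f_M ρ`
  have himage : Iio 0 ⊆ (fun s => -rM s) '' Iio 1 := fun y hy =>
    ⟨fM M (-y), fM_lt_one hM (neg_pos.2 hy), by simp [rM_fM hM hrM (neg_pos.2 hy)]⟩
  have hcont := hmono.continuousAt_of_image_mem_nhds (Iio_mem_nhds hs)
    (mem_of_superset (Iio_mem_nhds (neg_neg_iff_pos.2 (hrM s hs).1)) himage)
  simpa only [Pi.neg_def, neg_neg] using hcont.neg

theorem hasDerivAt_rM (hM : 0 < M) (hrM : ∀ s : ℝ, s < 1 → 0 < rM s ∧ fM M (rM s) = s)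
    {s : ℝ} (hs : s < 1) :
    HasDerivAt rM (-(4 * M ^ 2 / rM s * exp (-rM s / (2 * M)))) s := by
  have hr := (hrM s hs).1
  have hderiv_ne : -(rM s / (4 * M ^ 2)) * exp (rM s / (2 * M)) ≠ 0 := by
    rw [neg_mul, neg_ne_zero]
    positivity
  have hinv := HasDerivAt.of_local_left_inverse (continuousAt_rM hM hrM hs)
    (hasDerivAt_fM M (rM s)) hderiv_ne
    (eventually_of_mem (Iio_mem_nhds hs) fun y hy => (hrM y hy).2)
  refine hinv.congr_deriv ?_
  rw [neg_div, exp_neg]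
  field_simp

end rM

theorem Om2_div_four_mul (M : ℝ) (hM : M ≠ 0) (rM : ℝ → ℝ) (τ x : ℝ) :
    Om2 M rM τ x / (4 * M) = 2 * (4 * M ^ 2 / rr rM τ x * exp (-rr rM τ x / (2 * M))) := by
  rw [Om2]
  field_simp
  ring

/-- For every `M > 0` and `(τ,x)` with `(1-τ)² - x² < 1`, the radius function
`r(τ,x) = r_M((1-τ)² - x²)` has partial derivatives
`∂_τ r = (Ω²/(4M))·(1-τ)` and `∂_x r = (Ω²/(4M))·x`. -/
theorem radius_partials_tau_x (M : ℝ) (hM : 0 < M) (rM : ℝ → ℝ)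
    (hrM : ∀ s : ℝ, s < 1 → 0 < rM s ∧ fM M (rM s) = s)
    (τ x : ℝ) (h : (1 - τ) ^ 2 - x ^ 2 < 1) :
    HasDerivAt (fun t : ℝ => rr rM t x) (Om2 M rM τ x / (4 * M) * (1 - τ)) τ ∧
    HasDerivAt (fun y : ℝ => rr rM τ y) (Om2 M rM τ x / (4 * M) * x) x := by
  have hr := hasDerivAt_rM hM hrM h
  rw [Om2_div_four_mul M hM.ne', rr]
  constructor
  · have hs : HasDerivAt (fun t : ℝ => (1 - t) ^ 2 - x ^ 2) (2 * (1 - τ) * -1) τ := by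
      simpa using (((hasDerivAt_id τ).const_sub 1).pow 2).sub_const (x ^ 2)
    exact (hr.comp τ hs).congr_deriv (by ring)
  · have hs : HasDerivAt (fun y : ℝ => (1 - τ) ^ 2 - y ^ 2) (-(2 * x)) x := by
      simpa using ((hasDerivAt_id x).pow 2).const_sub ((1 - τ) ^ 2)
    exact (hr.comp x hs).congr_deriv (by ring)
end

section
/- For every real number M > 0, every τ ∈ (0,1], and every x ∈ ℝ with (1-τ)² - x² < 1, one has 1/r(τ,x)² ≤ exp(r(τ,x)/(2M))/(8M²·τ); in particular the sup norm of 1/r² on the slice Σ_τ is bounded by C/τ, a bound which fails to be integrable in τ on [0,T] for any T > 0. -/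
/-!
With `u = r/(2M)` the relation `f_M(r) = s` reads `(1 - u) eᵘ = s`. The second-order Taylor bound for
`eᵘ` gives `1 - (1 - u) eᵘ ≤ u² eᵘ / 2` for `u ≥ 0`, while on the slice `Σ_τ` with `τ ∈ (0,1]`
we have `s ≤ (1 - τ)² ≤ 1 - τ`. Hence `τ ≤ 1 - s ≤ r² e^{r/(2M)} / (8M²)`.
-/

open Real

lemma one_sub_one_sub_mul_exp_le {u : ℝ} (hu : 0 ≤ u) :
    1 - (1 - u) * exp u ≤ u ^ 2 * exp u / 2 := by
  have hquad : 0 ≤ u ^ 2 - 2 * u + 2 := by nlinarith [sq_nonneg (u - 1)]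
  -- `(1 + u + u²/2)(u² - 2u + 2) = 2 + u⁴/2`
  have key : 2 ≤ exp u * (u ^ 2 - 2 * u + 2) :=
    calc (2 : ℝ) ≤ (1 + u + u ^ 2 / 2) * (u ^ 2 - 2 * u + 2) := by nlinarith [pow_two_nonneg (u ^ 2)]
      _ ≤ exp u * (u ^ 2 - 2 * u + 2) :=
        mul_le_mul_of_nonneg_right (quadratic_le_exp_of_nonneg hu) hquad
  linarith

lemma one_sub_fM_le {M ρ : ℝ} (hM : 0 < M) (hρ : 0 ≤ ρ) :
    1 - fM M ρ ≤ ρ ^ 2 * exp (ρ / (2 * M)) / (8 * M ^ 2) := by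
  have h := one_sub_one_sub_mul_exp_le (div_nonneg hρ (by positivity : (0 : ℝ) ≤ 2 * M))
  rw [div_pow] at h
  calc 1 - fM M ρ ≤ ρ ^ 2 / (2 * M) ^ 2 * exp (ρ / (2 * M)) / 2 := h
    _ = ρ ^ 2 * exp (ρ / (2 * M)) / (8 * M ^ 2) := by field_simp; ring

/-- For every `M > 0`, every `τ ∈ (0,1]`, and every `x` with `(1-τ)² - x² < 1`, one has
`1/r(τ,x)² ≤ exp(r(τ,x)/(2M))/(8M²·τ)`; in particular the sup norm of `1/r²` on the slice
`Σ_τ` is bounded by `C/τ`, a bound which fails to be integrable in `τ` on `[0,T]`. -/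
theorem inverse_radius_squared_slice_bound (M : ℝ) (hM : 0 < M) (rM : ℝ → ℝ)
    (hrM : ∀ s : ℝ, s < 1 → 0 < rM s ∧ fM M (rM s) = s)
    (τ x : ℝ) (hτ0 : 0 < τ) (hτ1 : τ ≤ 1) (h : (1 - τ) ^ 2 - x ^ 2 < 1) :
    1 / (rr rM τ x) ^ 2 ≤ Real.exp (rr rM τ x / (2 * M)) / (8 * M ^ 2 * τ) := by
  obtain ⟨hr_pos, hf⟩ := hrM _ h
  have hslice : (1 - τ) ^ 2 - x ^ 2 ≤ 1 - τ := by nlinarith [sq_nonneg x]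
  have hτ : τ ≤ rr rM τ x ^ 2 * exp (rr rM τ x / (2 * M)) / (8 * M ^ 2) := by
    have := one_sub_fM_le hM hr_pos.le
    rw [hf] at this
    exact le_trans (by linarith) this
  rw [le_div_iff₀ (by positivity)] at hτ
  rw [div_le_div_iff₀ (by positivity) (by positivity)]
  linarith
end

section
/- For every real number M > 0 and every ε ∈ (0,1), the integral ∫₀^ε (Ω(0,x)/(4M·r(0,x)))² · Ω(0,x)·r(0,x)² dx diverges (equals +∞); that is, the angular component ^SK_{22} = (Ω/(4M))·(1-τ)/r of the second fundamental form of the initial hypersurface Σ₀ fails to be square-integrable against the induced volume density Ω·r², so ^SK ∉ L²(Σ₀). -/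
open MeasureTheory

/-- `Ω(τ,x) = √(Ω²(τ,x))`. -/
noncomputable def Om (M : ℝ) (rM : ℝ → ℝ) (τ x : ℝ) : ℝ := Real.sqrt (Om2 M rM τ x)

/-! With `u = r/(2M) ∈ (0,1)` the defining relation reads `(1 - u)eᵘ = 1 - x²`, and
`eᵘ(1 - u/2)² ≤ 1` turns it into `x² ≥ u²/4`, i.e. `r ≤ 4Mx`: `Σ₀` runs into the singularity
`r = 0` as `x → 0`. Hence `Ω² ≥ 8M²/(e x)`, while the integrand is `Ω³/(16M²)`: it dominates
a multiple of `1/x`, which is not integrable at `0`. -/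

open Set Real

theorem one_sub_mul_exp_le_one_sub_sq_div_four {u : ℝ} (hu0 : 0 ≤ u) (hu1 : u ≤ 1) :
    (1 - u) * exp u ≤ 1 - u ^ 2 / 4 := by
  have hhalf : exp (u / 2) * (1 - u / 2) ≤ 1 := by
    have h := one_sub_le_exp_neg (u / 2)
    rw [exp_neg] at h
    calc exp (u / 2) * (1 - u / 2) ≤ exp (u / 2) * (exp (u / 2))⁻¹ := by gcongr
      _ = 1 := mul_inv_cancel₀ (exp_pos _).ne'
  have hsq : exp u * (1 - u / 2) ^ 2 ≤ 1 := by
    calc exp u * (1 - u / 2) ^ 2 = (exp (u / 2) * (1 - u / 2)) ^ 2 := by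
          rw [mul_pow, ← exp_nat_mul]; ring_nf
      _ ≤ 1 := pow_le_one₀ (by nlinarith [exp_pos (u / 2)]) hhalf
  have h1u : 0 ≤ 1 - u := by linarith
  refine le_of_mul_le_mul_right ?_ (by nlinarith : 0 < (1 - u / 2) ^ 2)
  calc (1 - u) * exp u * (1 - u / 2) ^ 2 = (1 - u) * (exp u * (1 - u / 2) ^ 2) := by ring
    _ ≤ 1 - u := mul_le_of_le_one_right h1u hsq
    _ ≤ (1 - u ^ 2 / 4) * (1 - u / 2) ^ 2 := by nlinarith [mul_nonneg (sq_nonneg u) hu0]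

theorem lt_two_mul_of_fM_pos {M ρ : ℝ} (hM : 0 < M) (h : 0 < fM M ρ) : ρ < 2 * M := by
  have hu : 0 < 1 - ρ / (2 * M) := (mul_pos_iff_of_pos_right (exp_pos _)).1 h
  rwa [sub_pos, div_lt_one (by positivity)] at hu

theorem le_four_mul_of_fM_eq_one_sub_sq {M ρ x : ℝ} (hM : 0 < M) (hρ : 0 < ρ) (hx0 : 0 < x)
    (hx1 : x < 1) (hf : fM M ρ = 1 - x ^ 2) : ρ ≤ 4 * M * x := by
  have hρM : ρ < 2 * M := lt_two_mul_of_fM_pos hM (by rw [hf]; nlinarith)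
  set u := ρ / (2 * M) with hu
  have hu0 : 0 ≤ u := by positivity
  have hu1 : u ≤ 1 := by rw [hu, div_le_one (by positivity)]; exact hρM.le
  have hux : u ≤ 2 * x := by
    have := one_sub_mul_exp_le_one_sub_sq_div_four hu0 hu1
    rw [← fM, hf] at this
    nlinarith
  calc ρ = 2 * M * u := by rw [hu]; field_simp
    _ ≤ 4 * M * x := by nlinarith

theorem div_exp_one_div_le_Om2_zero {M : ℝ} (hM : 0 < M) {rM : ℝ → ℝ}
    (hrM : ∀ s : ℝ, s < 1 → 0 < rM s ∧ fM M (rM s) = s) {x : ℝ} (hx0 : 0 < x) (hx1 : x < 1) :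
    8 * M ^ 2 / exp 1 / x ≤ Om2 M rM 0 x := by
  obtain ⟨hr0, hf⟩ := hrM (1 - x ^ 2) (by nlinarith)
  have hrr : rr rM 0 x = rM (1 - x ^ 2) := by simp [rr]
  rw [Om2, hrr]
  set r := rM (1 - x ^ 2)
  have hrx := le_four_mul_of_fM_eq_one_sub_sq hM hr0 hx0 hx1 hf
  have hrM2 : r < 2 * M := lt_two_mul_of_fM_pos hM (by rw [hf]; nlinarith)
  have hpow : 8 * M ^ 2 / x ≤ 32 * M ^ 3 / r := by
    calc 8 * M ^ 2 / x = 32 * M ^ 3 / (4 * M * x) := by field_simp; ring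
      _ ≤ 32 * M ^ 3 / r := by gcongr
  have hexp : exp (-1) ≤ exp (-r / (2 * M)) := by
    gcongr
    rw [neg_div, neg_le_neg_iff, div_le_one (by positivity)]
    exact hrM2.le
  calc 8 * M ^ 2 / exp 1 / x = 8 * M ^ 2 / x * exp (-1) := by rw [exp_neg]; ring
    _ ≤ 32 * M ^ 3 / r * exp (-r / (2 * M)) := by gcongr

theorem exists_pos_div_le_integrand {M : ℝ} (hM : 0 < M) {rM : ℝ → ℝ}
    (hrM : ∀ s : ℝ, s < 1 → 0 < rM s ∧ fM M (rM s) = s) :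
    ∃ c > 0, ∀ x, 0 < x → x < 1 →
      c / x ≤ (Om M rM 0 x / (4 * M * rr rM 0 x)) ^ 2 * (Om M rM 0 x * (rr rM 0 x) ^ 2) := by
  set A := 8 * M ^ 2 / exp 1
  have hA : 0 < A := by positivity
  refine ⟨A * √A / (16 * M ^ 2), by positivity, fun x hx0 hx1 => ?_⟩
  have hΩ2 : A / x ≤ Om2 M rM 0 x := div_exp_one_div_le_Om2_zero hM hrM hx0 hx1
  have hΩ : √A ≤ Om M rM 0 x := sqrt_le_sqrt ((le_div_self hA.le hx0 hx1.le).trans hΩ2)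
  have hsq : Om M rM 0 x ^ 2 = Om2 M rM 0 x := sq_sqrt ((div_pos hA hx0).le.trans hΩ2)
  have hr : rr rM 0 x ≠ 0 := by
    rw [rr]; exact (hrM _ (by nlinarith)).1.ne'
  calc A * √A / (16 * M ^ 2) / x = A / x * √A / (16 * M ^ 2) := by ring
    _ ≤ Om2 M rM 0 x * Om M rM 0 x / (16 * M ^ 2) := by gcongr; exact hsq ▸ sq_nonneg _
    _ = _ := by rw [← hsq]; field_simp; ring

theorem lintegral_Ioo_const_div_eq_top {c ε : ℝ} (hc : 0 < c) (hε : 0 < ε) :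
    ∫⁻ x in Ioo 0 ε, ENNReal.ofReal (c / x) = ⊤ := by
  by_contra h
  have hint : IntegrableOn (fun x => c * x⁻¹) (Ioo 0 ε) := by
    refine (lintegral_ofReal_ne_top_iff_integrable (by fun_prop) ?_).1 h
    filter_upwards [ae_restrict_mem measurableSet_Ioo] with x hx
    exact div_nonneg hc.le hx.1.le
  rw [IntegrableOn, integrable_const_mul_iff (isUnit_iff_ne_zero.2 hc.ne'),
    ← IntegrableOn, ← intervalIntegrable_iff_integrableOn_Ioo_of_le hε.le] at hint
  simp [hε.ne] at hint

/-- For every `M > 0` and every `ε ∈ (0,1)`, the integral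
`∫₀^ε (Ω(0,x)/(4M·r(0,x)))² · Ω(0,x)·r(0,x)² dx` diverges (equals `+∞`); that is, the
angular component `^SK_{22} = (Ω/(4M))·(1-τ)/r` of the second fundamental form of the
initial hypersurface `Σ₀` fails to be square-integrable against the induced volume
density `Ω·r²`, so `^SK ∉ L²(Σ₀)`. -/
theorem second_fundamental_form_not_L2 (M : ℝ) (hM : 0 < M) (rM : ℝ → ℝ)
    (hrM : ∀ s : ℝ, s < 1 → 0 < rM s ∧ fM M (rM s) = s)
    (ε : ℝ) (hε0 : 0 < ε) (hε1 : ε < 1) :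
    ∫⁻ x in Set.Ioo (0 : ℝ) ε,
      ENNReal.ofReal
        ((Om M rM 0 x / (4 * M * rr rM 0 x)) ^ 2 * (Om M rM 0 x * (rr rM 0 x) ^ 2)) = ⊤ := by
  obtain ⟨c, hc, hle⟩ := exists_pos_div_le_integrand hM hrM
  refine eq_top_mono ?_ (lintegral_Ioo_const_div_eq_top hc hε0)
  refine setLIntegral_mono' measurableSet_Ioo fun x hx => ENNReal.ofReal_le_ofReal ?_
  exact hle x hx.1 (hx.2.trans hε1)
end

section
/- For every real number M > 0, every ε ∈ (0,1), and every real p ≥ 5/4, the integral ∫₀^ε r(0,x)^{-2p} · Ω(0,x)·r(0,x)² dx diverges (equals +∞); that is, the scalar curvature of the initial hypersurface Σ₀, which blows up like 1/r², fails to be in L^p(Σ₀) for all p ≥ 5/4. -/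
open MeasureTheory
open scoped ENNReal

/-!
Since `(1 - u)·eᵘ ≤ 1 - u²/4` for `u ≥ 0`, the equation `f_M(r) = 1 - x²` forces
`r(0,x) ≤ 4Mx`: the radius vanishes at least linearly as `x → 0`. There `Ω ≳ r^{-1/2}`,
so the integrand is `≳ r^{3/2 - 2p} ≥ r⁻¹ ≳ 1/x` once `p ≥ 5/4`, and `1/x` is not
integrable at `0`.
-/

open Real Set

lemma one_sub_mul_exp_le {u : ℝ} (hu : 0 ≤ u) : (1 - u) * exp u ≤ 1 - u ^ 2 / 4 := by
  rcases le_total u 1 with hu1 | hu1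
  · have h := exp_bound' hu hu1 (n := 2) two_pos
    norm_num [Finset.sum_range_succ] at h
    nlinarith [exp_pos u]
  · nlinarith [mul_le_mul_of_nonpos_left (add_one_le_exp u) (sub_nonpos.2 hu1)]

lemma le_mul_of_fM_eq_one_sub_sq {M ρ x : ℝ} (hM : 0 < M) (hρ : 0 ≤ ρ) (hx : 0 ≤ x)
    (h : fM M ρ = 1 - x ^ 2) : ρ ≤ 4 * M * x := by
  have hu : (ρ / (2 * M)) ^ 2 ≤ (2 * x) ^ 2 := by
    have := one_sub_mul_exp_le (u := ρ / (2 * M)) (by positivity)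
    rw [← fM, h] at this
    linarith
  have := (pow_le_pow_iff_left₀ (by positivity) (by positivity) two_ne_zero).1 hu
  rw [div_le_iff₀ (by positivity)] at this
  linarith

lemma sqrt_div_le_rpow_mul_sqrt_div_mul_sq {a ρ p : ℝ} (hρ0 : 0 < ρ) (hρ1 : ρ ≤ 1)
    (hp : 5 / 4 ≤ p) : √a / ρ ≤ ρ ^ (-(2 * p)) * (√(a / ρ) * ρ ^ 2) := by
  have hsq : ρ ^ (-(5 / 2 : ℝ)) * ρ ^ 2 = (√ρ)⁻¹ := by
    rw [sqrt_eq_rpow, ← rpow_neg hρ0.le, ← rpow_natCast, ← rpow_add hρ0]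
    norm_num
  calc √a / ρ = ρ ^ (-(5 / 2 : ℝ)) * (√(a / ρ) * ρ ^ 2) := by
        rw [mul_left_comm, hsq, sqrt_div' a hρ0.le, ← div_eq_mul_inv, div_div,
          mul_self_sqrt hρ0.le]
    _ ≤ ρ ^ (-(2 * p)) * (√(a / ρ) * ρ ^ 2) :=
        mul_le_mul_of_nonneg_right (rpow_le_rpow_of_exponent_ge hρ0 hρ1 (by linarith))
          (by positivity)

lemma lintegral_Ioo_ofReal_eq_top_of_div_le {g : ℝ → ℝ} {c δ : ℝ} (hc : 0 < c) (hδ : 0 < δ)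
    (h : ∀ x ∈ Ioo 0 δ, c / x ≤ g x) : ∫⁻ x in Ioo 0 δ, ENNReal.ofReal (g x) = ⊤ := by
  have hinv : ∫⁻ x in Ioo 0 δ, ENNReal.ofReal x⁻¹ = ⊤ := by
    by_contra hfin
    have hint : IntegrableOn (fun x : ℝ ↦ x⁻¹) (Ioo 0 δ) := by
      refine (lintegral_ofReal_ne_top_iff_integrable measurable_inv.aestronglyMeasurable ?_).1 hfin
      filter_upwards [ae_restrict_mem measurableSet_Ioo] with x hx
      exact inv_nonneg.2 hx.1.le
    replace hint : IntegrableOn (fun x : ℝ ↦ x ^ (-1 : ℝ)) (Ioo 0 δ) :=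
      hint.congr_fun (fun x _ ↦ (rpow_neg_one x).symm) measurableSet_Ioo
    exact lt_irrefl _ ((intervalIntegral.integrableOn_Ioo_rpow_iff hδ).1 hint)
  refine top_le_iff.1 (le_of_eq_of_le ?_ (setLIntegral_mono' measurableSet_Ioo fun x hx ↦
    ENNReal.ofReal_le_ofReal (h x hx)))
  simp_rw [div_eq_mul_inv, ENNReal.ofReal_mul hc.le]
  rw [lintegral_const_mul' _ _ ENNReal.ofReal_ne_top, hinv,
    ENNReal.mul_top (ENNReal.ofReal_pos.2 hc).ne']

/-- For every `M > 0`, every `ε ∈ (0,1)`, and every real `p ≥ 5/4`, the integral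
`∫₀^ε r(0,x)^{-2p} · Ω(0,x)·r(0,x)² dx` diverges (equals `+∞`); that is, the scalar
curvature of the initial hypersurface `Σ₀`, which blows up like `1/r²`, fails to be in
`L^p(Σ₀)` for all `p ≥ 5/4`. -/
theorem scalar_curvature_not_Lp (M : ℝ) (hM : 0 < M) (rM : ℝ → ℝ)
    (hrM : ∀ s : ℝ, s < 1 → 0 < rM s ∧ fM M (rM s) = s)
    (ε : ℝ) (hε0 : 0 < ε) (hε1 : ε < 1) (p : ℝ) (hp : 5 / 4 ≤ p) :
    ∫⁻ x in Set.Ioo (0 : ℝ) ε,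
      ENNReal.ofReal (rr rM 0 x ^ (-(2 * p)) * (Om M rM 0 x * (rr rM 0 x) ^ 2)) = ⊤ := by
  set a := 32 * M ^ 3 * exp (-2)
  have hδ : 0 < min ε (1 / (4 * M)) := lt_min hε0 (by positivity)
  have hc : 0 < √a / (4 * M) := by positivity
  refine top_le_iff.1 ((lintegral_Ioo_ofReal_eq_top_of_div_le hc hδ ?_).symm.le.trans
    (lintegral_mono_set (Ioo_subset_Ioo_right (min_le_left _ _))))
  rintro x ⟨hx0, hxδ⟩
  have hx1 : x < 1 := hxδ.trans_le ((min_le_left _ _).trans hε1.le)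
  obtain ⟨hr0, hfr⟩ : 0 < rr rM 0 x ∧ fM M (rr rM 0 x) = (1 - 0) ^ 2 - x ^ 2 :=
    hrM _ (by nlinarith)
  set r := rr rM 0 x
  have hr : r ≤ 4 * M * x := le_mul_of_fM_eq_one_sub_sq hM hr0.le hx0.le (by rw [hfr]; ring)
  have hr1 : r ≤ 1 :=
    hr.trans ((le_div_iff₀' (by positivity)).1 (hxδ.le.trans (min_le_right _ _)))
  have hexp : exp (-2) ≤ exp (-r / (2 * M)) := by
    gcongr
    rw [neg_div, neg_le_neg_iff, div_le_iff₀ (by positivity)]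
    nlinarith
  calc √a / (4 * M) / x = √a / (4 * M * x) := div_div _ _ _
    _ ≤ √a / r := div_le_div_of_nonneg_left (sqrt_nonneg a) hr0 hr
    _ ≤ r ^ (-(2 * p)) * (√(a / r) * r ^ 2) := sqrt_div_le_rpow_mul_sqrt_div_mul_sq hr0 hr1 hp
    _ ≤ r ^ (-(2 * p)) * (Om M rM 0 x * r ^ 2) := by
        unfold Om Om2
        rw [mul_div_right_comm]
        gcongr
end
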